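/- Lemma 3.3: Let T̂ ∈ ARI be the mould with T̂(u_1) = 0 and, for every r ≥ 2, T̂(u_1,…,u_r) = (B_r/r!) · Σ_{i=1}^{r} (−1)^{i−1} · C(r−1, i−1) · u_i, where B_r is the r-th Bernoulli number and C(n,k) denotes the binomial coefficient. Then dar⁻¹T̂ satisfies the strict Fay relations: ℱ(dar⁻¹T̂)(u_1,…,u_r) = 0 for every r ≥ 2. -/

import Mathlib

/-!
Moulds over ℚ: a mould is a family `A = (A_r)_{r ≥ 0}` where `A_r` lies in the
field `ℚ(u_1, …, u_r)` of rational functions in `r` commuting variables,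
realized here as the fraction field of `MvPolynomial (Fin r) ℚ`.
Substitution of ℚ-linearly independent linear forms is realized by lifting the
corresponding (injective) polynomial substitution map to the fraction fields.
-/

noncomputable section

/-- The polynomial ring `ℚ[u_1, …, u_r]` (variables are 0-indexed). -/
abbrev MPoly (r : ℕ) : Type := MvPolynomial (Fin r) ℚ

/-- The field of rational functions `ℚ(u_1, …, u_r)`. -/
abbrev MFrac (r : ℕ) : Type := FractionRing (MPoly r)

/-- A mould over ℚ: its depth-`r` part is a rational function of `r` variables;
its depth-`0` part is a constant. -/
abbrev Mould : Type := (r : ℕ) → MFrac r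

/-- The canonical embedding of polynomials into rational functions. -/
def toF {r : ℕ} (p : MPoly r) : MFrac r := algebraMap (MPoly r) (MFrac r) p

/-- The constant `q` viewed as a rational function in `r` variables. -/
def constF (r : ℕ) (q : ℚ) : MFrac r := toF (MvPolynomial.C q)

/-- The variable `u_{k+1}` (0-indexed: `X k`), with junk value `0` out of range. -/
def Xn (r k : ℕ) : MPoly r := if h : k < r then MvPolynomial.X ⟨k, h⟩ else 0

/-- The linear form `u_1 + ⋯ + u_n`. -/
def sumXn (r n : ℕ) : MPoly r := ∑ k ∈ Finset.range n, Xn r k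

/-- Substitution `A(ℓ_1, …, ℓ_s)` of a family of polynomials (in applications:
ℚ-linearly independent linear forms in `u_1, …, u_r`) into a rational function
`A ∈ ℚ(u_1,…,u_s)`, obtained by lifting the polynomial substitution map to the
fraction fields; junk value `0` if the substitution map is not injective
(which never occurs for linearly independent linear forms). -/
def msubst {s r : ℕ} (ℓ : Fin s → MPoly r) (A : MFrac s) : MFrac r := by
  classical
  exact if h : Function.Injective ((algebraMap (MPoly r) (MFrac r)).comp
      (MvPolynomial.aeval (R := ℚ) ℓ).toRingHom)
    then IsFractionRing.lift h A else 0

/-! ### The basic mould operators -/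

/-- Arguments of the swap: `(swap A)(v_1,…,v_r) = A(v_r, v_{r-1}-v_r, …, v_1-v_2)`. -/
def swapArgs (r : ℕ) : Fin r → MPoly r := fun m => Xn r (r - 1 - m.val) - Xn r (r - m.val)

/-- The swap of a mould. -/
def swapM (A : Mould) : Mould := fun r => msubst (swapArgs r) (A r)

/-- `(push_u A)(u_1,…,u_r) = A(−u_1−⋯−u_r, u_1,…,u_{r−1})`. -/
def pushArgs (r : ℕ) : Fin r → MPoly r := fun m =>
  if m.val = 0 then -(sumXn r r) else Xn r (m.val - 1)

def pushU (A : Mould) : Mould := fun r => msubst (pushArgs r) (A r)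

/-- `(push_u⁻¹ A)(u_1,…,u_r) = A(u_2,…,u_r, −u_1−⋯−u_r)`. -/
def pushInvArgs (r : ℕ) : Fin r → MPoly r := fun m =>
  if m.val = r - 1 then -(sumXn r r) else Xn r (m.val + 1)

def pushUInv (A : Mould) : Mould := fun r => msubst (pushInvArgs r) (A r)

/-- `(push_v B)(v_1,…,v_r) = B(−v_r, v_1−v_r, …, v_{r−1}−v_r)`. -/
def pushVArgs (r : ℕ) : Fin r → MPoly r := fun m =>
  if m.val = 0 then -(Xn r (r - 1)) else Xn r (m.val - 1) - Xn r (r - 1)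

def pushV (A : Mould) : Mould := fun r => msubst (pushVArgs r) (A r)

/-- `(push_v⁻¹ B)(v_1,…,v_r) = B(v_2−v_1, …, v_r−v_1, −v_1)`. -/
def pushVInvArgs (r : ℕ) : Fin r → MPoly r := fun m =>
  if m.val = r - 1 then -(Xn r 0) else Xn r (m.val + 1) - Xn r 0

def pushVInv (A : Mould) : Mould := fun r => msubst (pushVInvArgs r) (A r)

/-- `(circ B)(v_1,…,v_r) = B(v_2,…,v_r,v_1)`. -/
def circArgs (r : ℕ) : Fin r → MPoly r := fun m =>
  if m.val = r - 1 then Xn r 0 else Xn r (m.val + 1)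

def circM (A : Mould) : Mould := fun r => msubst (circArgs r) (A r)

/-- `(dur A)(u_1,…,u_r) = (u_1+⋯+u_r)·A(u_1,…,u_r)`. -/
def durM (A : Mould) : Mould := fun r => toF (sumXn r r) * A r

/-- `(dar A)(u_1,…,u_r) = u_1⋯u_r·A(u_1,…,u_r)`. -/
def darM (A : Mould) : Mould := fun r => toF (∏ k ∈ Finset.range r, Xn r k) * A r

/-- `(dar⁻¹ A)(u_1,…,u_r) = A(u_1,…,u_r)/(u_1⋯u_r)`. -/
def darInv (A : Mould) : Mould := fun r => A r / toF (∏ k ∈ Finset.range r, Xn r k)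

/-- `Δ = dar ∘ dur`. -/
def deltaM (A : Mould) : Mould := darM (durM A)

/-- `Δ⁻¹`, dividing the depth-`r` part by `u_1⋯u_r·(u_1+⋯+u_r)`. -/
def deltaInv (A : Mould) : Mould := fun r =>
  A r / toF ((∏ k ∈ Finset.range r, Xn r k) * sumXn r r)

/-! ### The Fay operator -/

/-- Arguments of the `i`-th Fay term (`1 ≤ i ≤ r`):
`(u_2,…,u_i, −ū_i, ū_{i+1}, u_{i+2},…,u_r)` for `i < r`, and
`(u_2,…,u_r, −ū_r)` for `i = r`, where `ū_i = u_1+⋯+u_i`. -/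
def fayArgs (r i : ℕ) : Fin r → MPoly r := fun m =>
  if m.val + 1 < i then Xn r (m.val + 1)
  else if m.val + 1 = i then -(sumXn r i)
  else if m.val = i then sumXn r (i + 1)
  else Xn r m.val

/-- The Fay operator:
`ℱ(B)(u_1,…,u_r) = B(u_1,…,u_r) + B(u_2,…,u_r,−ū_r) + Σ_{i=1}^{r−1} B(u_2,…,u_i,−ū_i,ū_{i+1},u_{i+2},…,u_r)`. -/
def Fay (A : Mould) : Mould := fun r =>
  A r + ∑ i ∈ Finset.Icc 1 r, msubst (fayArgs r i) (A r)

/-! ### Shuffles, alternality, push-invariance and circ-neutrality -/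

/-- Arguments realizing the shuffle of `(u_1,…,u_k)` and `(u_{k+1},…,u_r)` whose
set of positions for the first word is `S` (with `S.card = k`). -/
def shuffleArgs (r : ℕ) (S : Finset (Fin r)) : Fin r → MPoly r := fun m =>
  if m ∈ S then Xn r ((S.filter (fun x => x < m)).card)
  else Xn r (S.card + ((Sᶜ.filter (fun x => x < m)).card))

/-- A mould is alternal if all its shuffle sums
`A(sh((u_1,…,u_k),(u_{k+1},…,u_r)))` for `1 ≤ k ≤ r−1` vanish. -/
def Alternal (A : Mould) : Prop :=
  ∀ r k : ℕ, 1 ≤ k → k < r →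
    ∑ S ∈ Finset.powersetCard k (Finset.univ : Finset (Fin r)),
      msubst (shuffleArgs r S) (A r) = 0

/-- A mould is push-invariant if `push_u A = A` in every depth `r ≥ 1`. -/
def PushInvariant (A : Mould) : Prop := ∀ r : ℕ, 1 ≤ r → pushU A r = A r

/-- Arguments of the `i`-th term (`1 ≤ i ≤ r`) of the shuffle sum
`B(sh((v_1),(v_2,…,v_r)))`, namely `(v_2,…,v_i, v_1, v_{i+1},…,v_r)`. -/
def sh1Args (r i : ℕ) : Fin r → MPoly r := fun m =>
  if m.val + 1 < i then Xn r (m.val + 1)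
  else if m.val + 1 = i then Xn r 0
  else Xn r m.val

/-! ### Mould multiplication, `arat`, and exponentials -/

/-- Arguments `(u_{a+1}, …, u_{a+s})` (a consecutive segment of variables). -/
def segArgs (r a : ℕ) {s : ℕ} : Fin s → MPoly r := fun m => Xn r (a + m.val)

/-- Arguments `(u_1,…,u_{a−1}, u_a+⋯+u_b, u_{b+1},…,u_r)` (the block `u_a…u_b`
merged into a single sum), of length `s = r − (b − a)`. -/
def mergeArgs (r a b : ℕ) {s : ℕ} : Fin s → MPoly r := fun m =>
  if m.val + 1 < a then Xn r m.val
  else if m.val + 1 = a then ∑ k ∈ Finset.Icc (a - 1) (b - 1), Xn r k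
  else Xn r (b + m.val - a)

/-- The mould `arat(M)·Q`. -/
def arat (M Q : Mould) : Mould := fun r =>
  (∑ i ∈ Finset.Icc 1 (r - 1), ∑ j ∈ Finset.Icc (i + 1) (r - 1),
      msubst (segArgs r i) (M (j - i)) *
        (msubst (mergeArgs r i j) (Q (r - (j - i))) -
          msubst (mergeArgs r (i + 1) (j + 1)) (Q (r - (j - i)))))
  + (∑ i ∈ Finset.Icc 1 (r - 1),
      msubst (segArgs r 0) (M i) *
        (msubst (segArgs r i) (Q (r - i)) - msubst (mergeArgs r 1 (i + 1)) (Q (r - i))))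
  + (∑ i ∈ Finset.Icc 1 (r - 1),
      msubst (segArgs r i) (M (r - i)) *
        (msubst (mergeArgs r i r) (Q i) - msubst (segArgs r 0) (Q i)))

/-- Mould multiplication `mu(A,B)(u_1,…,u_r) = Σ_i A(u_1,…,u_i)B(u_{i+1},…,u_r)`. -/
def muM (A B : Mould) : Mould := fun r =>
  ∑ i ∈ Finset.range (r + 1), msubst (segArgs r 0) (A i) * msubst (segArgs r i) (B (r - i))

/-- The unit mould for `mu`. -/
def oneMould : Mould := fun r => if r = 0 then 1 else 0

/-- `mu`-powers of a mould. -/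
def muPow (Q : Mould) : ℕ → Mould
  | 0 => oneMould
  | n + 1 => muM (muPow Q n) Q

/-- `exp_mu(Q) = Σ_{n≥0} Q^{·n}/n!`; for `Q ∈ ARI` this is a finite sum in each
depth, since `Q^{·n}` vanishes in depths `< n`. -/
def expMu (Q : Mould) : Mould := fun r =>
  ∑ n ∈ Finset.range (r + 1), constF r (1 / (n.factorial : ℚ)) * muPow Q n r

/-- The mould `T̂` with `T̂(∅) = 0`, `T̂(u_1) = 0` and, for `r ≥ 2`,
`T̂(u_1,…,u_r) = (B_r/r!)·Σ_{i=1}^r (−1)^{i−1}·C(r−1,i−1)·u_i`,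
where `B_r` is the `r`-th Bernoulli number (convention `x/(eˣ−1) = Σ B_n xⁿ/n!`). -/
def bernoulliMould : Mould := fun r =>
  if r < 2 then 0
  else toF (MvPolynomial.C (bernoulli r / (r.factorial : ℚ)) *
    ∑ i ∈ Finset.range r, MvPolynomial.C ((-1 : ℚ) ^ i * ((r - 1).choose i : ℚ)) * Xn r i)

/-!
For `r ≥ 2`, `dar⁻¹T̂` in depth `r` is `ℓ(u)/(u_1⋯u_r)` with `ℓ = Σ c_m u_{m+1}` linear.
After the `i`-th Fay substitution the denominator is `-(u_2⋯u_r)·ū_i·ū_{i+1}/u_{i+1}`, so the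
`i`-th term is `ℓ_i·(1/ū_{i+1} - 1/ū_i)/(u_2⋯u_r)`, where `ℓ_i` is the substituted numerator
(for `i = 0` and `i = r` only one of the two fractions occurs). Summation by parts turns the Fay
sum into `Σ_j (ℓ_j - ℓ_{j+1})/ū_{j+1}` over `u_2⋯u_r`. Consecutive Fay substitutions differ by
multiples of `ū_{j+1}` in each argument, so every quotient is a constant; evaluating at
`u = (1,0,…,0)`, where all `ū_n = 1`, these constants telescope to `ℓ_0 - ℓ_r = c_0 + c_{r-1}`.
For `T̂` this is `B_r(1 + (-1)^(r-1))/r!`, which vanishes because `B_r = 0` for odd `r ≥ 3`.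
-/

open MvPolynomial Finset

lemma sum_range_mul_sub_eq_of_boundary {R : Type*} [CommRing R] (a w : ℕ → R) (n : ℕ)
    (h0 : w 0 = 0) (hn : w (n + 1) = 0) :
    ∑ i ∈ range (n + 1), a i * (w (i + 1) - w i)
      = ∑ i ∈ range n, (a i - a (i + 1)) * w (i + 1) := by
  simp only [mul_sub, sub_mul, sum_sub_distrib]
  rw [sum_range_succ, hn, sum_range_succ' (fun i => a i * w i), h0]
  ring

lemma bernoulli_mul_one_add_neg_one_pow {r : ℕ} (hr : 2 ≤ r) :
    bernoulli r * (1 + (-1) ^ (r - 1)) = 0 := by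
  rcases Nat.even_or_odd r with he | ho
  · rw [(Nat.Even.sub_odd (by omega) he odd_one).neg_one_pow]
    ring
  · rw [bernoulli_eq_zero_of_odd ho (by omega), zero_mul]

lemma toF_apply {r : ℕ} (p : MPoly r) : toF p = algebraMap (MPoly r) (MFrac r) p := rfl

lemma toF_ne_zero {r : ℕ} {p : MPoly r} (hp : p ≠ 0) : toF p ≠ 0 :=
  (map_ne_zero_iff _ (IsFractionRing.injective (MPoly r) (MFrac r))).mpr hp

lemma substitution_injective_of_leftInverse {s r : ℕ} {ℓ : Fin s → MPoly r}
    (μ : Fin r → MPoly s) (hμ : ∀ k, aeval μ (ℓ k) = X k) :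
    Function.Injective ((algebraMap (MPoly r) (MFrac r)).comp (aeval (R := ℚ) ℓ).toRingHom) := by
  have hcomp : (aeval μ).comp (aeval (R := ℚ) ℓ) = AlgHom.id ℚ (MPoly s) :=
    algHom_ext fun k => by simpa using hμ k
  refine (IsFractionRing.injective (MPoly r) (MFrac r)).comp
    (Function.LeftInverse.injective (g := aeval μ) fun p => ?_)
  simpa using congrArg (· p) hcomp

lemma msubst_toF_div {s r : ℕ} {ℓ : Fin s → MPoly r}
    (hℓ : Function.Injective ((algebraMap (MPoly r) (MFrac r)).comp (aeval (R := ℚ) ℓ).toRingHom))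
    (p q : MPoly s) :
    msubst ℓ (toF p / toF q) = toF (aeval ℓ p) / toF (aeval ℓ q) := by
  rw [msubst, dif_pos hℓ, map_div₀, toF_apply, toF_apply, IsFractionRing.lift_algebraMap,
    IsFractionRing.lift_algebraMap]
  rfl

lemma msubst_X {r : ℕ} (x : MFrac r) : msubst X x = x := by
  have hinj := substitution_injective_of_leftInverse (ℓ := X) (r := r) X fun k => aeval_X _ k
  rw [msubst, dif_pos hinj]
  refine DFunLike.congr_fun (IsLocalization.ringHom_ext (nonZeroDivisors (MPoly r))
    (j := IsFractionRing.lift hinj) (k := RingHom.id _) ?_) x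
  refine RingHom.ext fun p => ?_
  rw [RingHom.comp_apply, IsFractionRing.lift_algebraMap]
  simp

lemma Xn_of_lt {r k : ℕ} (hk : k < r) : Xn r k = X ⟨k, hk⟩ := dif_pos hk

lemma aeval_Xn {s r k : ℕ} (f : ℕ → MPoly r) (hk : k < s) :
    aeval (fun m : Fin s => f m) (Xn s k) = f k := by
  rw [Xn_of_lt hk, aeval_X]

lemma sumXn_zero (r : ℕ) : sumXn r 0 = 0 := rfl

lemma sumXn_succ (r n : ℕ) : sumXn r (n + 1) = sumXn r n + Xn r n := sum_range_succ _ n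

lemma eval_one_Xn {r k : ℕ} (hk : k < r) : eval 1 (Xn r k) = 1 := by
  simp [Xn_of_lt hk]

lemma Xn_ne_zero {r k : ℕ} (hk : k < r) : Xn r k ≠ 0 := fun h => by
  simpa [h] using eval_one_Xn hk

lemma sumXn_ne_zero {r n : ℕ} (hn : 1 ≤ n) (hnr : n ≤ r) : sumXn r n ≠ 0 := fun h => by
  have : eval 1 (sumXn r n) = n := by
    rw [sumXn, map_sum, sum_congr rfl fun k hk => eval_one_Xn (by simp at hk; omega)]
    simp
  rw [h, map_zero] at this
  exact absurd this.symm (by positivity)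

def fayArg (r i : ℕ) : ℕ → MPoly r := fun m =>
  if m + 1 < i then Xn r (m + 1)
  else if m + 1 = i then -(sumXn r i)
  else if m = i then sumXn r (i + 1)
  else Xn r m

lemma fayArgs_eq (r i : ℕ) : fayArgs r i = fun m : Fin r => fayArg r i m := rfl

lemma aeval_fayArgs_Xn {r k : ℕ} (i : ℕ) (hk : k < r) :
    aeval (fayArgs r i) (Xn r k) = fayArg r i k := by
  rw [fayArgs_eq]
  exact aeval_Xn _ hk

lemma fayArgs_zero (r : ℕ) : fayArgs r 0 = X := by
  ext1 ⟨m, hm⟩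
  change fayArg r 0 m = X ⟨m, hm⟩
  unfold fayArg
  rcases m with _ | m
  · simp [sumXn, Xn_of_lt hm]
  · simp [Xn_of_lt hm]

lemma Fay_eq_sum_range (B : Mould) (r : ℕ) :
    Fay B r = ∑ i ∈ range (r + 1), msubst (fayArgs r i) (B r) := by
  rw [Fay, sum_range_succ', fayArgs_zero, msubst_X, add_comm, ← Ico_add_one_right_eq_Icc,
    sum_Ico_eq_sum_range, Nat.add_sub_cancel]
  simp only [add_comm 1]

def fayInvArg (r j : ℕ) : ℕ → MPoly r := fun k =>
  if k = 0 then -(sumXn r (j + 1))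
  else if k ≤ j then Xn r (k - 1)
  else if k = j + 1 then Xn r j + Xn r (j + 1)
  else Xn r k

lemma aeval_fayInvArg_sumXn {r j : ℕ} (hj : j < r) :
    aeval (fun k : Fin r => fayInvArg r j k) (sumXn r (j + 1)) = -Xn r j := by
  rw [sumXn, map_sum, sum_range_succ', aeval_Xn _ (by omega),
    sum_congr rfl fun k hk => aeval_Xn _ (by simp at hk; omega)]
  rw [sum_congr rfl fun k hk => by
      rw [fayInvArg, if_neg k.succ_ne_zero, if_pos (by simp at hk; omega), Nat.add_sub_cancel],
    fayInvArg, if_pos rfl, sumXn_succ, sumXn]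
  ring

lemma aeval_fayInvArg_fayArgs {r j : ℕ} (hj : j < r) (k : Fin r) :
    aeval (fun k : Fin r => fayInvArg r j k) (fayArgs r (j + 1) k) = X k := by
  obtain ⟨k, hk⟩ := k
  have hinv := aeval_fayInvArg_sumXn hj
  simp only [fayArgs_eq, fayArg]
  rcases lt_trichotomy k j with h | rfl | h
  · rw [if_pos (by omega), aeval_Xn _ (by omega), fayInvArg, if_neg (by omega),
      if_pos (by omega), Nat.add_sub_cancel, Xn_of_lt hk]
  · simp only [lt_irrefl, if_false, if_true, map_neg, hinv, neg_neg, Xn_of_lt hk]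
  · rcases eq_or_lt_of_le (Nat.succ_le_of_lt h) with rfl | h'
    · rw [if_neg (by omega), if_neg (by omega), if_pos rfl, sumXn_succ, map_add, hinv,
        aeval_Xn _ hk, fayInvArg]
      simp [Xn_of_lt hk]
    · rw [if_neg (by omega), if_neg (by omega), if_neg (by omega), aeval_Xn _ hk, fayInvArg]
      simp [if_neg (by omega : k ≠ 0), if_neg (by omega : ¬ k ≤ j), if_neg (by omega : k ≠ j + 1),
        Xn_of_lt hk]

lemma fayArgs_injective {r i : ℕ} (hi : i ≤ r) :
    Function.Injective
      ((algebraMap (MPoly r) (MFrac r)).comp (aeval (R := ℚ) (fayArgs r i)).toRingHom) := by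
  rcases i with _ | j
  · exact substitution_injective_of_leftInverse X fun k => by simp [fayArgs_zero]
  · exact substitution_injective_of_leftInverse _ (aeval_fayInvArg_fayArgs hi)

def tailProd (r : ℕ) : MPoly r := ∏ k ∈ range (r - 1), Xn r (k + 1)

lemma tailProd_ne_zero (r : ℕ) : tailProd r ≠ 0 :=
  prod_ne_zero_iff.mpr fun k hk => Xn_ne_zero (by simp at hk; omega)

lemma prod_Xn_eq_mul_tailProd {r : ℕ} (hr : 1 ≤ r) :
    ∏ k ∈ range r, Xn r k = Xn r 0 * tailProd r := by
  obtain ⟨n, rfl⟩ := Nat.exists_eq_add_of_le' hr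
  rw [prod_range_succ', mul_comm, tailProd, Nat.add_sub_cancel]

lemma prod_fayArg_head (r j n : ℕ) (hr : r = j + 1 + n) :
    ∏ k ∈ range r, fayArg r (j + 1) k
      = -sumXn r (j + 1) * (∏ k ∈ range j, Xn r (k + 1)) *
          ∏ k ∈ range n, fayArg r (j + 1) (j + 1 + k) := by
  have hhead : ∀ k ∈ range j, fayArg r (j + 1) k = Xn r (k + 1) := fun k hk => by
    rw [fayArg, if_pos (by simp at hk; omega)]
  rw [show range r = range (j + 1 + n) by rw [hr], prod_range_add, prod_range_succ,
    prod_congr rfl hhead, fayArg,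
    if_neg (lt_irrefl _), if_pos rfl]
  ring

lemma prod_fayArg_top {r : ℕ} (hr : 1 ≤ r) :
    ∏ k ∈ range r, fayArg r r k = -(tailProd r * sumXn r r) := by
  obtain ⟨j, rfl⟩ := Nat.exists_eq_add_of_le' hr
  rw [prod_fayArg_head _ j 0 rfl, tailProd, Nat.add_sub_cancel]
  simp only [prod_range_zero]
  ring

lemma prod_fayArg_mul_Xn {r i : ℕ} (hi : 1 ≤ i) (hir : i < r) :
    (∏ k ∈ range r, fayArg r i k) * Xn r i = -(tailProd r * sumXn r i * sumXn r (i + 1)) := by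
  obtain ⟨j, rfl⟩ := Nat.exists_eq_add_of_le' hi
  obtain ⟨n, rfl⟩ : ∃ n, r = j + 1 + (n + 1) := ⟨r - j - 2, by omega⟩
  have htail : ∀ k ∈ range n, fayArg (j + 1 + (n + 1)) (j + 1) (j + 1 + (k + 1))
      = Xn _ (j + 1 + (k + 1)) := fun k _ => by
    rw [fayArg, if_neg (by omega), if_neg (by omega), if_neg (by omega)]
  have hsplit : tailProd (j + 1 + (n + 1))
      = (∏ k ∈ range j, Xn _ (k + 1)) * Xn _ (j + 1) * ∏ k ∈ range n, Xn _ (j + 1 + (k + 1)) := by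
    rw [tailProd, show j + 1 + (n + 1) - 1 = j + 1 + n by omega, prod_range_add,
      prod_range_succ]
    simp only [add_assoc]
  rw [prod_fayArg_head _ j (n + 1) rfl, prod_range_succ', prod_congr rfl htail, hsplit, fayArg,
    if_neg (by omega), if_neg (by omega), if_pos (by omega)]
  ring

-- The zero values at `i = 0` and `i = r + 1` account for the first and the last Fay term,
-- which have only one partial fraction each.
def invPartialSum (r i : ℕ) : MFrac r := if i ∈ Icc 1 r then (toF (sumXn r i))⁻¹ else 0

lemma inv_toF_aeval_fayArgs_prod {r i : ℕ} (hr : 1 ≤ r) (hi : i ≤ r) :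
    (toF (aeval (fayArgs r i) (∏ k ∈ range r, Xn r k)))⁻¹
      = (invPartialSum r (i + 1) - invPartialSum r i) * (toF (tailProd r))⁻¹ := by
  have hQ := toF_ne_zero (tailProd_ne_zero r)
  rcases i with _ | j
  · rw [fayArgs_zero, aeval_X_left_apply, prod_Xn_eq_mul_tailProd hr, invPartialSum,
      invPartialSum, if_pos (by simp; omega), if_neg (by simp), sumXn_succ, sumXn_zero, zero_add,
      toF_apply, map_mul, mul_inv, sub_zero, toF_apply, toF_apply]
  rw [map_prod, prod_congr rfl fun k hk => aeval_fayArgs_Xn _ (mem_range.mp hk),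
    invPartialSum, invPartialSum, if_pos (show j + 1 ∈ Icc 1 r by simp; omega)]
  have ha := toF_ne_zero (sumXn_ne_zero (by omega : 1 ≤ j + 1) hi)
  rcases eq_or_lt_of_le hi with rfl | hlt
  · rw [prod_fayArg_top hr, if_neg (by simp), toF_apply, map_neg, map_mul, ← toF_apply,
      ← toF_apply]
    field_simp
    ring
  · have hprod := congrArg toF (prod_fayArg_mul_Xn (by omega) hlt)
    have hx := toF_ne_zero (Xn_ne_zero hlt)
    have hax := toF_ne_zero (sumXn_ne_zero (by omega) (Nat.succ_le_of_lt hlt))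
    rw [if_pos (by simp; omega)]
    simp only [toF_apply, map_mul, map_neg, sumXn_succ r (j + 1), map_add] at *
    rw [eq_div_of_mul_eq hx hprod]
    field_simp
    ring

def linearForm (r : ℕ) (c : ℕ → ℚ) : MPoly r := ∑ m ∈ range r, C (c m) * Xn r m

lemma aeval_fayArgs_linearForm (r i : ℕ) (c : ℕ → ℚ) :
    aeval (fayArgs r i) (linearForm r c) = ∑ m ∈ range r, C (c m) * fayArg r i m := by
  rw [linearForm, map_sum]
  refine sum_congr rfl fun m hm => ?_
  rw [map_mul, aeval_C, algebraMap_eq, aeval_fayArgs_Xn _ (mem_range.mp hm)]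

lemma fayArg_sub_fayArg_succ_mem (r j m : ℕ) :
    fayArg r j m - fayArg r (j + 1) m ∈ ℚ ∙ sumXn r (j + 1) := by
  have hu := Submodule.mem_span_singleton_self (R := ℚ) (sumXn r (j + 1))
  unfold fayArg
  rcases lt_trichotomy (m + 1) j with h | rfl | h
  · rw [if_pos h, if_pos (by omega), sub_self]
    exact Submodule.zero_mem _
  · rw [if_neg (lt_irrefl _), if_pos rfl, if_pos (by omega)]
    convert Submodule.neg_mem _ hu using 1
    rw [sumXn_succ r (m + 1)]
    ring
  rcases eq_or_ne m j with rfl | h'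
  · rw [if_neg (by omega), if_neg (by omega), if_pos rfl, if_neg (by omega), if_pos rfl,
      sub_neg_eq_add]
    exact Submodule.add_mem _ hu hu
  rcases eq_or_ne m (j + 1) with rfl | h''
  · rw [if_neg (by omega), if_neg (by omega), if_neg (by omega), if_neg (by omega),
      if_neg (by omega), if_pos rfl]
    convert Submodule.neg_mem _ hu using 1
    rw [sumXn_succ r (j + 1)]
    ring
  · rw [if_neg (by omega), if_neg (by omega), if_neg h', if_neg (by omega), if_neg (by omega),
      if_neg h'', sub_self]
    exact Submodule.zero_mem _

def firstUnitVector (r : ℕ) : Fin r → ℚ := fun k => if (k : ℕ) = 0 then 1 else 0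

lemma eval_firstUnitVector_Xn {r k : ℕ} (hk : k < r) :
    eval (firstUnitVector r) (Xn r k) = if k = 0 then 1 else 0 := by
  rw [Xn_of_lt hk, eval_X, firstUnitVector]

lemma eval_firstUnitVector_sumXn {r n : ℕ} (hn : 1 ≤ n) (hnr : n ≤ r) :
    eval (firstUnitVector r) (sumXn r n) = 1 := by
  rw [sumXn, map_sum, sum_congr rfl fun k hk => eval_firstUnitVector_Xn (by simp at hk; omega),
    sum_ite_eq' (range n) 0, if_pos (by simp; omega)]

lemma eval_fayArgs_zero_linearForm {r : ℕ} (hr : 1 ≤ r) (c : ℕ → ℚ) :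
    eval (firstUnitVector r) (aeval (fayArgs r 0) (linearForm r c)) = c 0 := by
  rw [fayArgs_zero, aeval_X_left_apply, linearForm, map_sum,
    sum_eq_single 0 (fun m hm hm0 => by
      rw [eval_mul, eval_firstUnitVector_Xn (mem_range.mp hm), if_neg hm0, mul_zero])
      (fun h => absurd (mem_range.mpr hr) h),
    eval_mul, eval_firstUnitVector_Xn hr, if_pos rfl, eval_C, mul_one]

lemma eval_fayArgs_top_linearForm {r : ℕ} (hr : 1 ≤ r) (c : ℕ → ℚ) :
    eval (firstUnitVector r) (aeval (fayArgs r r) (linearForm r c)) = -c (r - 1) := by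
  have hlast : fayArg r r (r - 1) = -sumXn r r := by
    rw [fayArg, if_neg (by omega), if_pos (by omega)]
  rw [aeval_fayArgs_linearForm, map_sum,
    sum_eq_single (r - 1) (fun m hm hm1 => by
      have hm := mem_range.mp hm
      rw [eval_mul, fayArg, if_pos (by omega), eval_firstUnitVector_Xn (by omega),
        if_neg (by omega), mul_zero])
      (fun h => absurd (mem_range.mpr (by omega)) h),
    eval_mul, hlast, eval_neg, eval_firstUnitVector_sumXn hr le_rfl, eval_C, mul_neg, mul_one]

lemma aeval_fayArgs_linearForm_sub_succ {r j : ℕ} (hj : j < r) (c : ℕ → ℚ) :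
    aeval (fayArgs r j) (linearForm r c) - aeval (fayArgs r (j + 1)) (linearForm r c)
      = C (eval (firstUnitVector r) (aeval (fayArgs r j) (linearForm r c))
          - eval (firstUnitVector r) (aeval (fayArgs r (j + 1)) (linearForm r c)))
        * sumXn r (j + 1) := by
  have hmem : aeval (fayArgs r j) (linearForm r c) - aeval (fayArgs r (j + 1)) (linearForm r c)
      ∈ ℚ ∙ sumXn r (j + 1) := by
    rw [aeval_fayArgs_linearForm, aeval_fayArgs_linearForm, ← sum_sub_distrib]
    refine Submodule.sum_mem _ fun m _ => ?_
    rw [← mul_sub, C_mul']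
    exact Submodule.smul_mem _ _ (fayArg_sub_fayArg_succ_mem r j m)
  obtain ⟨a, ha⟩ := Submodule.mem_span_singleton.mp hmem
  rw [← eval_sub, ← ha, smul_eval, eval_firstUnitVector_sumXn (by omega) hj, mul_one, C_mul']

lemma constF_eq_algebraMap (r : ℕ) (q : ℚ) : constF r q = algebraMap ℚ (MFrac r) q := by
  rw [constF, toF_apply, ← algebraMap_eq, ← IsScalarTower.algebraMap_apply]

theorem Fay_darInv_of_linearForm {A : Mould} {r : ℕ} (hr : 1 ≤ r) (c : ℕ → ℚ)
    (hA : A r = toF (linearForm r c)) :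
    Fay (darInv A) r = constF r (c 0 + c (r - 1)) / toF (tailProd r) := by
  set L : ℕ → MPoly r := fun i => aeval (fayArgs r i) (linearForm r c)
  set d : ℕ → ℚ := fun i => eval (firstUnitVector r) (L i)
  have hterm : ∀ i ∈ range (r + 1), msubst (fayArgs r i) (darInv A r)
      = toF (L i) * (invPartialSum r (i + 1) - invPartialSum r i) * (toF (tailProd r))⁻¹ := by
    intro i hi
    have hi := Nat.lt_succ_iff.mp (mem_range.mp hi)
    rw [darInv, hA, msubst_toF_div (fayArgs_injective hi), div_eq_mul_inv,
      inv_toF_aeval_fayArgs_prod hr hi, mul_assoc]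
  have hstep : ∀ j ∈ range r, (toF (L j) - toF (L (j + 1))) * invPartialSum r (j + 1)
      = constF r (d j - d (j + 1)) := by
    intro j hj
    have hj := mem_range.mp hj
    have hu : toF (sumXn r (j + 1)) ≠ 0 := toF_ne_zero (sumXn_ne_zero (by omega) hj)
    rw [toF_apply, toF_apply, ← map_sub, aeval_fayArgs_linearForm_sub_succ hj, invPartialSum,
      if_pos (by simp; omega), map_mul, ← toF_apply, ← toF_apply, mul_inv_cancel_right₀ hu]
    rfl
  have hends : d 0 - d r = c 0 + c (r - 1) := by
    simp only [d, L, eval_fayArgs_zero_linearForm hr, eval_fayArgs_top_linearForm hr,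
      sub_neg_eq_add]
  rw [Fay_eq_sum_range, sum_congr rfl hterm, ← sum_mul,
    sum_range_mul_sub_eq_of_boundary _ _ _ (by simp [invPartialSum]) (by simp [invPartialSum]),
    sum_congr rfl hstep]
  simp only [constF_eq_algebraMap, ← map_sum, sum_range_sub', hends, div_eq_mul_inv]

lemma bernoulliMould_eq_linearForm {r : ℕ} (hr : 2 ≤ r) :
    bernoulliMould r = toF (linearForm r fun m =>
      bernoulli r / r.factorial * ((-1) ^ m * ((r - 1).choose m : ℚ))) := by
  rw [bernoulliMould, if_neg (by omega), linearForm, mul_sum]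
  simp only [map_mul, mul_assoc]

/-- **Lemma 3.3.** The mould `dar⁻¹T̂` satisfies the strict Fay relations:
`ℱ(dar⁻¹T̂)(u_1,…,u_r) = 0` for every `r ≥ 2`. -/
theorem lemma_3_3 : ∀ r : ℕ, 2 ≤ r → Fay (darInv bernoulliMould) r = 0 := by
  intro r hr
  rw [Fay_darInv_of_linearForm (by omega) _ (bernoulliMould_eq_linearForm hr)]
  have hcoeff : bernoulli r / r.factorial * ((-1) ^ 0 * ((r - 1).choose 0 : ℚ))
      + bernoulli r / r.factorial * ((-1) ^ (r - 1) * ((r - 1).choose (r - 1) : ℚ)) = 0 := by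
    simp only [Nat.choose_zero_right, Nat.choose_self, Nat.cast_one, pow_zero, mul_one]
    rw [← mul_one_add, div_mul_eq_mul_div, bernoulli_mul_one_add_neg_one_pow hr, zero_div]
  rw [hcoeff, constF_eq_algebraMap, map_zero, zero_div]

end
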